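/- arXiv:math-ph/0006003 — 2 statements merged into one kernel-verified Lean document; each statement's English description precedes it below -/
import Mathlib

section
/- Let Γ act on ℂ∪{∞} with elements g whose action on the coordinate z is z∘g = Z_g where Z_g is holomorphic with derivative Z'_g. Then the 2-cochain p̃₁(g₁,g₂) = (d ln Z'₁)∘g₂ ∧ d ln Z'₂ is a group 2-cocycle with values in 2-forms: (δp̃₁)(g₁,g₂,g₃) = p̃₁(g₂,g₃) − p̃₁(g₁g₂,g₃) + p̃₁(g₁,g₂g₃) − p̃₁(g₁,g₂)∘g₃ = 0. -/
/-- Let `Γ` act on `ℂ ∪ {∞}`, each `g` acting on the coordinate by a holomorphic map `Z_g`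
with nonvanishing derivative `Z'_g`.  Here `ρ g` is pullback by `g` (a ring homomorphism on
forms, contravariant: `ρ(gh) = ρ h ∘ ρ g`), and `α g = d ln Z'_g` satisfies the chain-rule
cocycle identity `α(g₁g₂) = (α g₁)∘g₂ + α g₂`.  Then the 2-cochain
`p̃₁(g₁,g₂) = (d ln Z'₁)∘g₂ ∧ d ln Z'₂ = ρ g₂ (α g₁) * α g₂`
is a group 2-cocycle with values in 2-forms:
`(δp̃₁)(g₁,g₂,g₃) = p̃₁(g₂,g₃) − p̃₁(g₁g₂,g₃) + p̃₁(g₁,g₂g₃) − p̃₁(g₁,g₂)∘g₃ = 0`. -/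
theorem p1_group_cocycle {Γ A : Type*} [Group Γ] [Ring A]
    (ρ : Γ → A →+* A) (hρ : ∀ (g h : Γ) (a : A), ρ (g * h) a = ρ h (ρ g a))
    (α : Γ → A) (hα : ∀ g h : Γ, α (g * h) = ρ h (α g) + α h) :
    ∀ g₁ g₂ g₃ : Γ,
      ρ g₃ (α g₂) * α g₃ - ρ g₃ (α (g₁ * g₂)) * α g₃
        + ρ (g₂ * g₃) (α g₁) * α (g₂ * g₃) - ρ g₃ (ρ g₂ (α g₁) * α g₂) = 0 := by
  intro g₁ g₂ g₃
  simp only [hα, hρ, map_add, map_mul]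
  noncomm_ring
end

section
/- Let g₁, g₂ be the transformations of M = S¹ × (ℂ∪{∞}) given by z∘g_j = e^{i t n_j}/z, t∘g_j = t, with n_j ∈ ℤ. Then ∫_{∂C} (d ln Z'₁)∘g₂ ∧ d ln Z'₂ = ±8π²(n₁ − n₂), where C = {(z,t) : |z| ≤ 1} and ∂C = {|z| = 1} × S¹ is the boundary torus (sign depending on orientation). -/
open Real

/-- On the boundary torus `∂C = {|z| = 1} × S¹` of `M = S¹ × (ℂ ∪ {∞})`, parametrized by
`z = e^{iφ}`, `t ∈ [0,2π)`, the pullback `(d ln Z'₁) ∘ g₂` is `d ln u` where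
`u(φ,t) = Z'₁ ∘ g₂ = −e^{itn₁} e^{−2i(tn₂ − φ)}` (since `Z'_j = −e^{itn_j}/z²` and `g₂` acts
on the torus by `z = e^{iφ} ↦ e^{i(tn₂ − φ)}`). -/
noncomputable def uform (n₁ n₂ : ℤ) (φ t : ℝ) : ℂ :=
  -Complex.exp (Complex.I * (n₁ : ℂ) * (t : ℂ)) *
    Complex.exp (-2 * Complex.I * ((n₂ : ℂ) * (t : ℂ) - (φ : ℂ)))

/-- On the torus, `d ln Z'₂ = d ln v` where `v(φ,t) = Z'₂ = −e^{itn₂} e^{−2iφ}`. -/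
noncomputable def vform (n₂ : ℤ) (φ t : ℝ) : ℂ :=
  -Complex.exp (Complex.I * (n₂ : ℂ) * (t : ℂ)) * Complex.exp (-2 * Complex.I * (φ : ℂ))

/-- The coefficient of `dt ∧ dφ` in `(d ln Z'₁)∘g₂ ∧ d ln Z'₂` on the torus:
`(∂_t ln u)(∂_φ ln v) − (∂_φ ln u)(∂_t ln v)`. -/
noncomputable def integrand (n₁ n₂ : ℤ) (φ t : ℝ) : ℂ :=
  (deriv (fun s => uform n₁ n₂ φ s) t / uform n₁ n₂ φ t) *
      (deriv (fun s => vform n₂ s t) φ / vform n₂ φ t)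
    - (deriv (fun s => uform n₁ n₂ s t) φ / uform n₁ n₂ φ t) *
      (deriv (fun s => vform n₂ φ s) t / vform n₂ φ t)

lemma hd_exp (c d : ℂ) (x : ℝ) :
    HasDerivAt (fun s : ℝ => Complex.exp (c * (s : ℂ) + d))
      (Complex.exp (c * (x : ℂ) + d) * c) x := by
  have h1 : HasDerivAt (fun s : ℝ => c * (s : ℂ) + d) c x := by
    simpa using ((Complex.ofRealCLM.hasDerivAt (x := x)).const_mul c).add_const d
  exact h1.cexp

lemma deriv_neg_exp (c d : ℂ) (x : ℝ) :
    deriv (fun s : ℝ => -Complex.exp (c * (s : ℂ) + d)) x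
      = -(Complex.exp (c * (x : ℂ) + d) * c) := by
  exact ((hd_exp c d x).neg).deriv

lemma integrand_eq (n₁ n₂ : ℤ) (φ t : ℝ) :
    integrand n₁ n₂ φ t = 2 * ((n₁ : ℂ) - (n₂ : ℂ)) := by
  have hu : ∀ ψ s : ℝ, uform n₁ n₂ ψ s
      = -Complex.exp ((Complex.I * n₁ + -2 * Complex.I * n₂) * (s : ℂ)
          + 2 * Complex.I * (ψ : ℂ)) := by
    intro ψ s
    rw [uform, neg_mul, ← Complex.exp_add, ← neg_mul_eq_neg_mul]
    congr 2
    ring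
  have hv : ∀ ψ s : ℝ, vform n₂ ψ s
      = -Complex.exp (Complex.I * n₂ * (s : ℂ) + -2 * Complex.I * (ψ : ℂ)) := by
    intro ψ s
    rw [vform, neg_mul, ← Complex.exp_add, ← neg_mul_eq_neg_mul]
  have hut : deriv (fun s => uform n₁ n₂ φ s) t
      = uform n₁ n₂ φ t * (Complex.I * n₁ + -2 * Complex.I * n₂) := by
    simp only [hu]
    rw [deriv_neg_exp]; ring
  have huφ : deriv (fun s => uform n₁ n₂ s t) φ
      = uform n₁ n₂ φ t * (2 * Complex.I) := by
    have : ∀ s : ℝ, uform n₁ n₂ s t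
        = -Complex.exp (2 * Complex.I * (s : ℂ)
            + (Complex.I * n₁ + -2 * Complex.I * n₂) * (t : ℂ)) := by
      intro s; rw [hu s t]; ring_nf
    simp only [this]
    rw [deriv_neg_exp]; ring
  have hvt : deriv (fun s => vform n₂ φ s) t
      = vform n₂ φ t * (Complex.I * n₂) := by
    simp only [hv]
    rw [deriv_neg_exp]; ring
  have hvφ : deriv (fun s => vform n₂ s t) φ
      = vform n₂ φ t * (-2 * Complex.I) := by
    have : ∀ s : ℝ, vform n₂ s t
        = -Complex.exp (-2 * Complex.I * (s : ℂ) + Complex.I * n₂ * (t : ℂ)) := by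
      intro s; rw [hv s t]; ring_nf
    simp only [this]
    rw [deriv_neg_exp]; ring
  have hune : uform n₁ n₂ φ t ≠ 0 := by
    rw [uform]; simp [Complex.exp_ne_zero]
  have hvne : vform n₂ φ t ≠ 0 := by
    rw [vform]; simp [Complex.exp_ne_zero]
  rw [integrand, hut, huφ, hvt, hvφ]
  field_simp
  ring_nf
  simp [Complex.I_sq]
  ring

/-- Let `g₁, g₂` act on `M = S¹ × (ℂ ∪ {∞})` by `z∘g_j = e^{itn_j}/z`, `t∘g_j = t`.  Then
`∫_{∂C} (d ln Z'₁)∘g₂ ∧ d ln Z'₂ = ±8π²(n₁ − n₂)` over the boundary torus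
`∂C = {|z| = 1} × S¹` (sign depending on the orientation), written as an explicit double
integral over `(φ, t) ∈ [0, 2π)²`. -/
theorem boundary_torus_integral (n₁ n₂ : ℤ) :
    (∫ t in (0 : ℝ)..(2 * π), ∫ φ in (0 : ℝ)..(2 * π), integrand n₁ n₂ φ t)
        = 8 * (π : ℂ) ^ 2 * ((n₁ : ℂ) - (n₂ : ℂ)) ∨
    (∫ t in (0 : ℝ)..(2 * π), ∫ φ in (0 : ℝ)..(2 * π), integrand n₁ n₂ φ t)
        = -(8 * (π : ℂ) ^ 2 * ((n₁ : ℂ) - (n₂ : ℂ))) := by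
  left
  simp only [integrand_eq]
  simp only [intervalIntegral.integral_const, sub_zero, smul_smul, Complex.real_smul]
  push_cast
  ring
end
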